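/- Let D be a weighted digraph on a finite vertex set V and let M be a matching in D, i.e., a set of arcs of D such that no two distinct arcs of M share any endpoint. Let w(M) denote the total weight of the arcs in M. Then mac(D) ≥ w(D)/4 + w(M)/4. -/

import Mathlib

/-!
Choose a random dicut in which the two ends of every matching arc are put on opposite sides, each
orientation with probability 1/2, and all other vertices are placed independently and uniformly.
Then every arc is cut with probability at least 1/4 and every matching arc with probability 1/2,
so the expected weight of the dicut is at least w(D)/4 + w(M)/4. The probability space is
`σ : V → Bool`, after contracting each matching arc onto its tail, and expectations are sums over
all `σ`.
-/

open scoped BigOperators Classical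

noncomputable section

namespace PaperStmt

variable {V : Type*} [Fintype V]

/-- Total weight of a weighted digraph given by `w : V → V → ℝ`. -/
def totalWeight (w : V → V → ℝ) : ℝ := ∑ u, ∑ v, w u v

/-- Weight of the dicut `(X, Xᶜ)`. -/
def cutWeight (w : V → V → ℝ) (X : Finset V) : ℝ := ∑ x ∈ X, ∑ y ∈ Xᶜ, w x y

/-- Maximum weight of a directed cut. -/
def mac (w : V → V → ℝ) : ℝ :=
  Finset.univ.sup' ⟨∅, Finset.mem_univ ∅⟩ (fun X : Finset V => cutWeight w X)

/-- `r(v) = w⁺(v) - w⁻(v)`. -/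
def rv (w : V → V → ℝ) (v : V) : ℝ := (∑ u, w v u) - (∑ u, w u v)

/-- `r⁺(D) = ∑_{v : r(v) > 0} r(v)`. -/
def rPlus (w : V → V → ℝ) : ℝ :=
  ∑ v ∈ Finset.univ.filter (fun v => 0 < rv w v), rv w v

open Finset

section CoordinateCounts

variable {α : Type*} [Fintype α]

lemma two_mul_card_filter_apply_eq (a : α) (p : Bool) :
    2 * #{σ : α → Bool | σ a = p} = 2 ^ Fintype.card α := by
  have h := Fintype.card_filter_piFinset_const_eq_of_mem (univ : Finset Bool) a (mem_univ p)
  rw [Fintype.piFinset_univ, card_univ, Fintype.card_bool] at h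
  rw [h, ← pow_succ', Nat.sub_add_cancel (Fintype.card_pos_iff.2 ⟨a⟩)]

lemma four_mul_card_filter_apply_eq_and_apply_eq {a b : α} (hab : a ≠ b) (p q : Bool) :
    4 * #{σ : α → Bool | σ a = p ∧ σ b = q} = 2 ^ Fintype.card α := by
  have hfiber : ∀ x : Bool × Bool,
      #{σ : α → Bool | (σ a, σ b) = x} = #{σ : α → Bool | σ a = p ∧ σ b = q} := by
    rintro ⟨p', q'⟩
    refine card_bij' (fun σ _ => Function.update (Function.update σ a p) b q)
      (fun σ _ => Function.update (Function.update σ a p') b q') ?_ ?_ ?_ ?_ <;>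
      intro σ hσ <;> simp only [mem_filter, mem_univ, true_and, Prod.mk.injEq] at hσ ⊢ <;>
      try funext j
    all_goals simp only [Function.update_apply]; split_ifs <;> simp_all
  have h := card_eq_sum_card_fiberwise (s := (univ : Finset (α → Bool))) (t := univ)
    (f := fun σ => (σ a, σ b)) (fun _ _ => mem_univ _)
  simp only [hfiber, sum_const, card_univ, Fintype.card_prod, Fintype.card_bool,
    Fintype.card_fun, smul_eq_mul] at h
  exact h.symm

end CoordinateCounts

section Averaging

variable {ι : Type*} [Fintype ι] (w : V → V → ℝ)

lemma cutWeight_le_mac (X : Finset V) : cutWeight w X ≤ mac w :=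
  le_sup' (fun X : Finset V => cutWeight w X) (mem_univ X)

lemma le_mac_of_card_mul_le_sum [Nonempty ι] (X : ι → Finset V) {c : ℝ}
    (h : Fintype.card ι * c ≤ ∑ i, cutWeight w (X i)) : c ≤ mac w := by
  obtain ⟨i, -, hi⟩ := exists_le_of_sum_le (f := fun _ => c) univ_nonempty (by simpa using h)
  exact hi.trans (cutWeight_le_mac w (X i))

lemma cutWeight_eq_sum_ite (X : Finset V) :
    cutWeight w X = ∑ u, ∑ v, if u ∈ X ∧ v ∉ X then w u v else 0 := by
  rw [cutWeight, ← Fintype.sum_prod_type', ← sum_product', ← sum_filter]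
  congr 1
  ext ⟨u, v⟩
  simp

lemma sum_cutWeight_eq (X : ι → Finset V) :
    ∑ i, cutWeight w (X i) = ∑ u, ∑ v, (#{i | u ∈ X i ∧ v ∉ X i} : ℝ) * w u v := by
  simp only [cutWeight_eq_sum_ite]
  rw [sum_comm]
  refine sum_congr rfl fun u _ => ?_
  rw [sum_comm]
  refine sum_congr rfl fun v _ => ?_
  rw [← sum_filter, sum_const, nsmul_eq_mul]

end Averaging

lemma sum_sum_ite_mem (M : Finset (V × V)) (f : V → V → ℝ) :
    ∑ u, ∑ v, (if (u, v) ∈ M then f u v else 0) = ∑ a ∈ M, f a.1 a.2 := by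
  rw [← Fintype.sum_prod_type' (fun u v => if (u, v) ∈ M then f u v else 0), sum_ite_mem,
    univ_inter]

section LabelCut

variable {α : Type*} (ρ : V → α) (s : V → Bool)

def labelCut (σ : α → Bool) : Finset V := {v | σ (ρ v) = s v}

lemma mem_labelCut {σ : α → Bool} {v : V} : v ∈ labelCut ρ s σ ↔ σ (ρ v) = s v := by
  simp [labelCut]

variable {ρ s} [Fintype α]

lemma two_mul_card_labelCut_of_eq {u v : V} (hρ : ρ u = ρ v) (hs : s u ≠ s v) :
    2 * #{σ | u ∈ labelCut ρ s σ ∧ v ∉ labelCut ρ s σ} = 2 ^ Fintype.card α := by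
  rw [← two_mul_card_filter_apply_eq (ρ u) (s u)]
  congr 2
  ext σ
  simp only [mem_filter, mem_univ, true_and, mem_labelCut, ← hρ, and_iff_left_iff_imp]
  exact fun h h' => hs (h.symm.trans h')

lemma two_pow_le_four_mul_card_labelCut (hinj : ∀ u v, ρ u = ρ v → s u = s v → u = v)
    {u v : V} (huv : u ≠ v) :
    2 ^ Fintype.card α ≤ 4 * #{σ | u ∈ labelCut ρ s σ ∧ v ∉ labelCut ρ s σ} := by
  by_cases hρ : ρ u = ρ v
  · have h := two_mul_card_labelCut_of_eq hρ fun hs => huv (hinj u v hρ hs)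
    omega
  · rw [← four_mul_card_filter_apply_eq_and_apply_eq hρ (s u) (!s v)]
    apply le_of_eq
    congr 2
    ext σ
    simp [mem_labelCut, Bool.eq_not_iff]

end LabelCut

lemma exists_contraction_of_matching {β : Type*} (M : Finset (β × β))
    (hloop : ∀ e ∈ M, e.1 ≠ e.2)
    (hM : ∀ a ∈ M, ∀ b ∈ M, a ≠ b → a.1 ≠ b.1 ∧ a.1 ≠ b.2 ∧ a.2 ≠ b.1 ∧ a.2 ≠ b.2) :
    ∃ (ρ : β → β) (s : β → Bool),
      (∀ e ∈ M, ρ e.1 = ρ e.2) ∧ ∀ u v, ρ u = ρ v → s u = s v → u = v := by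
  have hhead : Function.Injective fun e : M => e.1.2 := by
    rintro ⟨e, he⟩ ⟨f, hf⟩ h
    by_contra hne
    exact (hM e he f hf fun hef => hne (Subtype.ext hef)).2.2.2 h
  have htail_ne_head : ∀ e ∈ M, ∀ f ∈ M, e.1 ≠ f.2 := by
    intro e he f hf
    rcases eq_or_ne e f with rfl | hne
    · exact hloop e he
    · exact (hM e he f hf hne).2.1
  -- `ρ` sends the head of each matching arc to its tail and fixes every other vertex.
  let ρ := Function.extend (fun e : M => e.1.2) (fun e : M => e.1.1) id
  have hρ_head : ∀ e ∈ M, ρ e.2 = e.1 := fun e he => hhead.extend_apply _ _ ⟨e, he⟩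
  have hρ_of_not_head : ∀ v, (¬∃ e ∈ M, e.2 = v) → ρ v = v := fun v hv =>
    Function.extend_apply' _ _ _ fun ⟨e, he⟩ => hv ⟨e.1, e.2, he⟩
  refine ⟨ρ, fun v => decide (∃ e ∈ M, e.2 = v), fun e he => ?_, fun u v huv hs => ?_⟩
  · rw [hρ_head e he, hρ_of_not_head e.1 fun ⟨f, hf, h⟩ => htail_ne_head e he f hf h.symm]
  · simp only [decide_eq_decide] at hs
    by_cases hu : ∃ e ∈ M, e.2 = u
    · obtain ⟨e, he, rfl⟩ := hu
      obtain ⟨f, hf, rfl⟩ := hs.1 ⟨e, he, rfl⟩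
      rw [hρ_head e he, hρ_head f hf] at huv
      rcases eq_or_ne e f with rfl | hne
      · rfl
      · exact absurd huv (hM e he f hf hne).1
    · rwa [hρ_of_not_head u hu, hρ_of_not_head v (hs.not.1 hu)] at huv

lemma card_labelCut_mul_ge {α : Type*} [Fintype α] {w : V → V → ℝ} (hnn : ∀ u v, 0 ≤ w u v)
    (hdiag : ∀ v, w v v = 0) {M : Finset (V × V)} {ρ : V → α} {s : V → Bool}
    (hρM : ∀ e ∈ M, ρ e.1 = ρ e.2) (hinj : ∀ u v, ρ u = ρ v → s u = s v → u = v) (u v : V) :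
    (2 ^ Fintype.card α / 4 : ℝ) * (w u v + if (u, v) ∈ M then w u v else 0)
      ≤ #{σ | u ∈ labelCut ρ s σ ∧ v ∉ labelCut ρ s σ} * w u v := by
  rcases eq_or_ne u v with rfl | huv
  · simp [hdiag]
  split_ifs with huvM
  · have h := two_mul_card_labelCut_of_eq (hρM _ huvM) fun hs => huv (hinj u v (hρM _ huvM) hs)
    rw [← Nat.cast_inj (R := ℝ)] at h
    push_cast at h
    rw [← h]
    exact le_of_eq (by ring)
  · have h : (2 ^ Fintype.card α : ℝ) ≤ 4 * #{σ | u ∈ labelCut ρ s σ ∧ v ∉ labelCut ρ s σ} := by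
      exact_mod_cast two_pow_le_four_mul_card_labelCut hinj huv
    rw [add_zero]
    exact mul_le_mul_of_nonneg_right (by linarith) (hnn u v)

theorem matching_lower_bound_general {V : Type*} [Fintype V]
    (w : V → V → ℝ) (hnn : ∀ u v, 0 ≤ w u v) (hdiag : ∀ v, w v v = 0)
    (M : Finset (V × V)) (hMarc : ∀ a ∈ M, 0 < w a.1 a.2)
    (hMatch : ∀ a ∈ M, ∀ b ∈ M, a ≠ b →
      a.1 ≠ b.1 ∧ a.1 ≠ b.2 ∧ a.2 ≠ b.1 ∧ a.2 ≠ b.2) :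
    totalWeight w / 4 + (∑ a ∈ M, w a.1 a.2) / 4 ≤ mac w := by
  have hloop : ∀ e ∈ M, e.1 ≠ e.2 := fun e he h => by simpa [h, hdiag] using hMarc e he
  obtain ⟨ρ, s, hρM, hinj⟩ := exists_contraction_of_matching M hloop hMatch
  refine le_mac_of_card_mul_le_sum w (labelCut ρ s) ?_
  rw [sum_cutWeight_eq, Fintype.card_fun, Fintype.card_bool]
  calc ((2 ^ Fintype.card V : ℕ) : ℝ) * (totalWeight w / 4 + (∑ a ∈ M, w a.1 a.2) / 4)
      = ∑ u, ∑ v, (2 ^ Fintype.card V / 4 : ℝ) * (w u v + if (u, v) ∈ M then w u v else 0) := by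
        simp only [mul_add, sum_add_distrib, ← mul_sum, sum_sum_ite_mem, totalWeight]
        push_cast
        ring
    _ ≤ _ := sum_le_sum fun u _ => sum_le_sum fun v _ => card_labelCut_mul_ge hnn hdiag hρM hinj u v

theorem matching_lower_bound {V : Type*} [Fintype V] [Nonempty V]
    (w : V → V → ℝ) (hnn : ∀ u v, 0 ≤ w u v) (hdiag : ∀ v, w v v = 0)
    (M : Finset (V × V)) (hMarc : ∀ a ∈ M, 0 < w a.1 a.2)
    (hMatch : ∀ a ∈ M, ∀ b ∈ M, a ≠ b →
      a.1 ≠ b.1 ∧ a.1 ≠ b.2 ∧ a.2 ≠ b.1 ∧ a.2 ≠ b.2) :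
    totalWeight w / 4 + (∑ a ∈ M, w a.1 a.2) / 4 ≤ mac w :=
  matching_lower_bound_general w hnn hdiag M hMarc hMatch

end PaperStmt
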